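/- Let Y₁,…,Yₙ be a stationary (G,θ)-geometrically ergodic hidden Markov chain on ℕ with stationary output distribution ρ, and let ρ̂ = ρ̂⁽ⁿ⁾ be the empirical distribution ρ̂_y = (1/n)∑_{i=1}^n 1[Y_i = y]. Then for every y ∈ ℕ, Var[ρ̂_y] ≤ ρ_y·(1+2Gθ)/(n(1−θ)), and consequently E[ ∑_{y∈ℕ} (ρ_y − ρ̂_y)² ] ≤ (1+2Gθ)/(n(1−θ)). -/

import Mathlib

open scoped BigOperators
open Filter

noncomputable section

/-- Total variation distance `‖μ − ν‖_TV = (1/2) ∑ₛ |μ(s) − ν(s)|`. -/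
def tv {α : Type*} (μ ν : α → ℝ) : ℝ := (1 / 2) * ∑' s, |μ s - ν s|

/-- Column-stochastic Markov kernel on ℕ: `A y x = A(y|x)`. -/
def IsKernel (A : ℕ → ℕ → ℝ) : Prop :=
  (∀ y x, 0 ≤ A y x) ∧ ∀ x, ∑' y, A y x = 1

/-- Stochastic vector on ℕ. -/
def IsStochastic (ξ : ℕ → ℝ) : Prop := (∀ x, 0 ≤ ξ x) ∧ ∑' x, ξ x = 1

/-- Kernel applied to a vector: `(Aξ)_y = ∑ₓ A(y|x) ξₓ`. -/
def kerApp (A : ℕ → ℕ → ℝ) (ξ : ℕ → ℝ) : ℕ → ℝ := fun y => ∑' x, A y x * ξ x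

/-- Iterated kernel application: `kerIter A s ξ = Aˢ ξ`. -/
def kerIter (A : ℕ → ℕ → ℝ) : ℕ → (ℕ → ℝ) → ℕ → ℝ
  | 0, ξ => ξ
  | s + 1, ξ => kerApp A (kerIter A s ξ)

/-- Point mass at `x`. -/
def dirac (x : ℕ) : ℕ → ℝ := fun y => if y = x then 1 else 0

/-- `(G,θ)`-geometric ergodicity of the kernel `A` with stationary distribution `π`:
`τ_{s+1} = sup_x ‖Aˢ δₓ − π‖_TV ≤ G θˢ` for all `s ≥ 0` (i.e. `τ_s ≤ G θ^{s-1}` for `s ≥ 1`),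
with `1 ≤ G` and `0 ≤ θ < 1`. -/
def IsGeomErgodic (A : ℕ → ℕ → ℝ) (π : ℕ → ℝ) (G θ : ℝ) : Prop :=
  1 ≤ G ∧ 0 ≤ θ ∧ θ < 1 ∧ IsStochastic π ∧ kerApp A π = π ∧
    ∀ (s x : ℕ), tv (kerIter A s (dirac x)) π ≤ G * θ ^ s

/-- Joint law of the Markov chain `(p₁, A)` on `ℕⁿ`. -/
def markovLaw (p : ℕ → ℝ) (A : ℕ → ℕ → ℝ) : (n : ℕ) → (Fin n → ℕ) → ℝ
  | 0, _ => 1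
  | n + 1, x => p (x 0) * ∏ i : Fin n, A (x i.succ) (x i.castSucc)

/-- Joint law of the hidden Markov chain `(p₁, A, B)` on `ℕⁿ`. -/
def hmmLaw (p : ℕ → ℝ) (A B : ℕ → ℕ → ℝ) (n : ℕ) (y : Fin n → ℕ) : ℝ :=
  ∑' x : Fin n → ℕ, markovLaw p A n x * ∏ i : Fin n, B (y i) (x i)

/-- Probability of an event under a law. -/
def prob {α : Type*} (μ : α → ℝ) (S : Set α) : ℝ := ∑' s : S, μ s.1

/-- Expectation of a function under a law. -/
def expect {α : Type*} (μ : α → ℝ) (f : α → ℝ) : ℝ := ∑' s, μ s * f s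

/-- Empirical distribution of a sample `Y ∈ ℕⁿ`. -/
def emp {n : ℕ} (Y : Fin n → ℕ) (v : ℕ) : ℝ :=
  (∑ i : Fin n, if Y i = v then (1 : ℝ) else 0) / n



open scoped ENNReal

/-!
Write `ρ̂_y = n⁻¹ ∑ₖ 1[Yₖ = y]`. By stationarity each `Yₖ` has law `ρ`, so
`Var ρ̂_y = n⁻² ∑_{k,l} (P(Yₖ = y, Yₗ = y) - ρ_y²)`. For `k < l` the Markov property gives
`P(Yₖ = y, Yₗ = y) = ∑_z π_z B(y|z) (B A^{l-k} δ_z)(y)`, and geometric ergodicity puts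
`(B A^{l-k} δ_z)(y)` within `G θ^{l-k}` of `ρ_y`; the diagonal terms are at most `ρ_y`.
Summing the geometric series gives the first bound, and summing it over `y` the second.

The identities for the chain are computed with `ℝ≥0∞`-valued sums, where sums can be
reordered freely, and transferred to `ℝ` through `ENNReal.ofReal`.
-/

section ProbLaw

variable {ι : Type*} {μ : ι → ℝ}

def IsProbLaw (μ : ι → ℝ) : Prop := (∀ a, 0 ≤ μ a) ∧ ∑' a, μ a = 1

theorem IsProbLaw.summable (hμ : IsProbLaw μ) : Summable μ := by
  by_contra h
  simpa [tsum_eq_zero_of_not_summable h] using hμ.2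

theorem IsProbLaw.tsum_ofReal (hμ : IsProbLaw μ) : ∑' a, ENNReal.ofReal (μ a) = 1 := by
  rw [← ENNReal.ofReal_tsum_of_nonneg hμ.1 hμ.summable, hμ.2, ENNReal.ofReal_one]

theorem IsProbLaw.le_one (hμ : IsProbLaw μ) (a : ι) : μ a ≤ 1 :=
  hμ.2 ▸ hμ.summable.le_tsum a fun b _ => hμ.1 b

theorem IsProbLaw.summable_mul (hμ : IsProbLaw μ) {f : ι → ℝ} {C : ℝ} (hf : ∀ a, |f a| ≤ C) :
    Summable fun a => μ a * f a :=
  (hμ.summable.mul_right C).of_norm_bounded fun a => by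
    rw [Real.norm_eq_abs, abs_mul, abs_of_nonneg (hμ.1 a)]
    exact mul_le_mul_of_nonneg_left (hf a) (hμ.1 a)

theorem expect_finset_sum {κ : Type*} {s : Finset κ} {f : κ → ι → ℝ}
    (hf : ∀ i ∈ s, Summable fun a => μ a * f i a) :
    expect μ (fun a => ∑ i ∈ s, f i a) = ∑ i ∈ s, expect μ (f i) := by
  simp only [expect, Finset.mul_sum]
  exact Summable.tsum_finsetSum hf

theorem expect_div_const (f : ι → ℝ) (c : ℝ) :
    expect μ (fun a => f a / c) = expect μ f / c := by
  simp only [expect, mul_div_assoc', tsum_div_const]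

theorem IsProbLaw.expect_sub_expect_sq (hμ : IsProbLaw μ) {f : ι → ℝ} {C : ℝ}
    (hf : ∀ a, |f a| ≤ C) :
    expect μ (fun a => (f a - expect μ f) ^ 2) = expect μ (fun a => f a ^ 2) - expect μ f ^ 2 := by
  set m := expect μ f
  have hf2 : ∀ a, |f a ^ 2| ≤ C ^ 2 := fun a => by
    rw [abs_pow]; exact pow_le_pow_left₀ (abs_nonneg _) (hf a) 2
  have hs2 := hμ.summable_mul hf2
  have hs1 := (hμ.summable_mul hf).mul_left (2 * m)
  have hs0 := hμ.summable.mul_left (m ^ 2)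
  calc expect μ (fun a => (f a - m) ^ 2)
      = ∑' a, (μ a * f a ^ 2 - 2 * m * (μ a * f a) + m ^ 2 * μ a) :=
        tsum_congr fun a => by ring
    _ = expect μ (fun a => f a ^ 2) - 2 * m * m + m ^ 2 * 1 := by
        rw [(hs2.sub hs1).tsum_add hs0, hs2.tsum_sub hs1, tsum_mul_left, tsum_mul_left, hμ.2]
        rfl
    _ = expect μ (fun a => f a ^ 2) - m ^ 2 := by ring

theorem tsum_tsum_le_of_nonneg {κ : Type*} {f : ι → κ → ℝ} (hf : ∀ a b, 0 ≤ f a b)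
    (hs : ∀ b, Summable (f · b)) {c : κ → ℝ} (hc : Summable c) (hfc : ∀ b, ∑' a, f a b ≤ c b) :
    ∑' a, ∑' b, f a b ≤ ∑' b, c b := by
  have hsum : Summable fun b => ∑' a, f a b :=
    hc.of_nonneg_of_le (fun b => tsum_nonneg fun a => hf a b) hfc
  have hprod : Summable (Function.uncurry fun b a => f a b) :=
    (summable_prod_of_nonneg fun p => hf p.2 p.1).mpr ⟨hs, hsum⟩
  rw [hprod.tsum_comm' hs fun a => hprod.prod_symm.prod_factor a]
  exact hsum.tsum_le_tsum hfc hc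

end ProbLaw

theorem IsStochastic.isProbLaw {ξ : ℕ → ℝ} (hξ : IsStochastic ξ) : IsProbLaw ξ := hξ

theorem tsum_eq_toReal_tsum_ofReal {ι : Type*} {f : ι → ℝ} (hf : ∀ a, 0 ≤ f a) :
    ∑' a, f a = (∑' a, ENNReal.ofReal (f a)).toReal := by
  rw [ENNReal.tsum_toReal_eq fun _ => ENNReal.ofReal_ne_top]
  simp [ENNReal.toReal_ofReal (hf _)]

theorem ENNReal.tsum_fin_pi_prod {α : Type*} :
    ∀ {n : ℕ} (h : Fin n → α → ℝ≥0∞), ∑' y : Fin n → α, ∏ i, h i (y i) = ∏ i, ∑' w, h i w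
  | 0, h => by simp
  | n + 1, h => by
    rw [← (Fin.consEquiv fun _ => α).tsum_eq, ENNReal.tsum_prod', Fin.prod_univ_succ]
    simp only [Fin.consEquiv_apply, Fin.prod_univ_succ, Fin.cons_zero, Fin.cons_succ,
      ENNReal.tsum_mul_left, ENNReal.tsum_mul_right, ENNReal.tsum_fin_pi_prod]

section ChainCalculus

variable {α : Type*} (K : α → α → ℝ≥0∞)

def kerPush (ξ : α → ℝ≥0∞) (y : α) : ℝ≥0∞ := ∑' x, K y x * ξ x

def kerPull (h : α → ℝ≥0∞) (x : α) : ℝ≥0∞ := ∑' y, h y * K y x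

def chainLaw (p : α → ℝ≥0∞) : (n : ℕ) → (Fin n → α) → ℝ≥0∞
  | 0, _ => 1
  | n + 1, x => p (x 0) * ∏ i : Fin n, K (x i.succ) (x i.castSucc)

/-- `chainExpect K n f z` is the expectation of `∏ i, f i (X i)` for the chain started at `z`. -/
def chainExpect : (n : ℕ) → (Fin n → α → ℝ≥0∞) → α → ℝ≥0∞
  | 0, _, _ => 1
  | n + 1, f, z => f 0 z * kerPull K (chainExpect n fun i => f i.succ) z

variable {K}

theorem tsum_mul_kerPush (h ξ : α → ℝ≥0∞) :
    ∑' y, h y * kerPush K ξ y = ∑' x, kerPull K h x * ξ x := by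
  simp only [kerPush, kerPull, ← ENNReal.tsum_mul_left, ← ENNReal.tsum_mul_right, mul_assoc]
  exact ENNReal.tsum_comm

theorem tsum_mul_kerPush_iterate (s : ℕ) (h ξ : α → ℝ≥0∞) :
    ∑' y, h y * (kerPush K)^[s] ξ y = ∑' x, (kerPull K)^[s] h x * ξ x := by
  induction s generalizing ξ with
  | zero => rfl
  | succ s ih =>
    rw [Function.iterate_succ_apply, ih, tsum_mul_kerPush, Function.iterate_succ_apply']

theorem kerPull_iterate_apply [DecidableEq α] (s : ℕ) (h : α → ℝ≥0∞) (z : α) :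
    (kerPull K)^[s] h z = ∑' y, h y * (kerPush K)^[s] (fun x => if x = z then 1 else 0) y := by
  rw [tsum_mul_kerPush_iterate]
  simp

theorem tsum_kerPull_iterate_mul_of_stationary {π : α → ℝ≥0∞} (hπ : kerPush K π = π)
    (s : ℕ) (h : α → ℝ≥0∞) : ∑' x, (kerPull K)^[s] h x * π x = ∑' x, h x * π x := by
  rw [← tsum_mul_kerPush_iterate, Function.iterate_fixed hπ]

theorem kerPull_single [DecidableEq α] (v : α) : kerPull K (Pi.single v 1) = K v := by
  ext x
  simp [kerPull, Pi.single_apply]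

theorem kerPull_one (hK : ∀ x, ∑' y, K y x = 1) : kerPull K 1 = 1 := by
  ext x
  simp [kerPull, hK x]

end ChainCalculus

section ChainLaw

variable {α : Type*} {K : α → α → ℝ≥0∞}

theorem chainLaw_succ (p : α → ℝ≥0∞) (n : ℕ) (x : Fin (n + 1) → α) :
    chainLaw K p (n + 1) x = p (x 0) * chainLaw K (K · (x 0)) n (Fin.tail x) := by
  cases n with
  | zero => simp [chainLaw]
  | succ n => simp [chainLaw, Fin.prod_univ_succ, Fin.tail]

variable (hK : ∀ x, ∑' y, K y x = 1)
include hK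

theorem tsum_chainLaw_mul_prod {p : α → ℝ≥0∞} (hp : ∑' z, p z = 1) (n : ℕ)
    (f : Fin n → α → ℝ≥0∞) :
    ∑' x : Fin n → α, chainLaw K p n x * ∏ i, f i (x i) = ∑' z, chainExpect K n f z * p z := by
  induction n generalizing p with
  | zero => simp [chainLaw, chainExpect, hp]
  | succ n ih =>
    rw [← (Fin.consEquiv fun _ => α).tsum_eq, ENNReal.tsum_prod']
    refine tsum_congr fun a => ?_
    have hsplit : ∀ b : Fin n → α,
        chainLaw K p (n + 1) (Fin.cons a b) * ∏ i, f i (Fin.cons (α := fun _ => α) a b i)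
          = p a * f 0 a * (chainLaw K (K · a) n b * ∏ i : Fin n, f i.succ (b i)) := by
      intro b
      rw [chainLaw_succ, Fin.prod_univ_succ]
      simp only [Fin.cons_zero, Fin.tail_cons, Fin.cons_succ]
      ring
    refine (tsum_congr fun b => hsplit b).trans ?_
    rw [ENNReal.tsum_mul_left, ih (hK a)]
    simp only [chainExpect, kerPull]
    ring

theorem chainExpect_one (n : ℕ) : chainExpect K n 1 = 1 := by
  induction n with
  | zero => rfl
  | succ n ih => ext z; simp [chainExpect, ← Pi.one_def, ih, kerPull_one hK]

theorem tsum_chainLaw {p : α → ℝ≥0∞} (hp : ∑' z, p z = 1) (n : ℕ) :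
    ∑' x : Fin n → α, chainLaw K p n x = 1 := by
  simpa [chainExpect_one hK, hp] using tsum_chainLaw_mul_prod hK hp n 1

theorem chainExpect_single (h : α → ℝ≥0∞) {n k : ℕ} (hk : k < n) :
    chainExpect K n (fun i => if (i : ℕ) = k then h else 1) = (kerPull K)^[k] h := by
  induction n generalizing k with
  | zero => omega
  | succ n ih =>
    ext z
    cases k with
    | zero => simp [chainExpect, ← Pi.one_def, chainExpect_one hK, kerPull_one hK]
    | succ k =>
      simp only [chainExpect, Fin.val_zero, Fin.val_succ, Nat.add_right_cancel_iff,
        ih (Nat.lt_of_succ_lt_succ hk), Function.iterate_succ_apply']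
      simp

theorem chainExpect_pair (h₁ h₂ : α → ℝ≥0∞) {n i j : ℕ} (hij : i < j) (hj : j < n) :
    chainExpect K n (fun t => if (t : ℕ) = i then h₁ else if (t : ℕ) = j then h₂ else 1)
      = (kerPull K)^[i] (h₁ * (kerPull K)^[j - i] h₂) := by
  induction n generalizing i j with
  | zero => omega
  | succ n ih =>
    obtain ⟨j, rfl⟩ : ∃ j', j = j' + 1 := ⟨j - 1, by omega⟩
    ext z
    cases i with
    | zero =>
      simp [chainExpect, chainExpect_single hK h₂ (Nat.lt_of_succ_lt_succ hj),
        Function.iterate_succ_apply']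
    | succ i =>
      simp only [chainExpect, Fin.val_zero, Fin.val_succ, Nat.add_right_cancel_iff,
        ih (Nat.lt_of_succ_lt_succ hij) (Nat.lt_of_succ_lt_succ hj), Function.iterate_succ_apply',
        Nat.add_sub_add_right]
      simp

end ChainLaw

section RealKernels

variable {A B : ℕ → ℕ → ℝ} {ξ : ℕ → ℝ}

def kerOfReal (A : ℕ → ℕ → ℝ) (y x : ℕ) : ℝ≥0∞ := ENNReal.ofReal (A y x)

theorem IsKernel.isProbLaw (hA : IsKernel A) (x : ℕ) : IsProbLaw (A · x) :=
  ⟨fun y => hA.1 y x, hA.2 x⟩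

theorem IsKernel.le_one (hA : IsKernel A) (y x : ℕ) : A y x ≤ 1 :=
  (hA.isProbLaw x).le_one y

theorem IsKernel.tsum_kerOfReal (hA : IsKernel A) (x : ℕ) : ∑' y, kerOfReal A y x = 1 :=
  (hA.isProbLaw x).tsum_ofReal

theorem IsKernel.kerOfReal_le_one (hA : IsKernel A) (y x : ℕ) : kerOfReal A y x ≤ 1 :=
  ENNReal.ofReal_le_one.mpr (hA.le_one y x)

theorem IsKernel.summable_mul (hA : IsKernel A) (hξ : IsStochastic ξ) (y : ℕ) :
    Summable fun x => A y x * ξ x :=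
  Summable.of_nonneg_of_le (fun x => mul_nonneg (hA.1 y x) (hξ.1 x))
    (fun x => mul_le_of_le_one_left (hξ.1 x) (hA.le_one y x)) (hξ.isProbLaw.summable)

theorem IsKernel.ofReal_kerApp (hA : IsKernel A) (hξ : IsStochastic ξ) (y : ℕ) :
    ENNReal.ofReal (kerApp A ξ y) = kerPush (kerOfReal A) (ENNReal.ofReal ∘ ξ) y := by
  rw [kerApp, ENNReal.ofReal_tsum_of_nonneg (fun x => mul_nonneg (hA.1 y x) (hξ.1 x))
    (hA.summable_mul hξ y)]
  exact tsum_congr fun x => ENNReal.ofReal_mul (hA.1 y x)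

theorem IsKernel.kerApp_isStochastic (hA : IsKernel A) (hξ : IsStochastic ξ) :
    IsStochastic (kerApp A ξ) := by
  have hnonneg (y : ℕ) : 0 ≤ kerApp A ξ y := tsum_nonneg fun x => mul_nonneg (hA.1 y x) (hξ.1 x)
  refine ⟨hnonneg, ?_⟩
  have hmass := tsum_mul_kerPush (K := kerOfReal A) 1 (ENNReal.ofReal ∘ ξ)
  simp only [Pi.one_apply, one_mul, kerPull_one hA.tsum_kerOfReal] at hmass
  rw [tsum_eq_toReal_tsum_ofReal hnonneg]
  simp [hA.ofReal_kerApp hξ, hmass, hξ.isProbLaw.tsum_ofReal]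

theorem IsKernel.kerIter_isStochastic (hA : IsKernel A) (hξ : IsStochastic ξ) (s : ℕ) :
    IsStochastic (kerIter A s ξ) := by
  induction s with
  | zero => exact hξ
  | succ s ih => exact hA.kerApp_isStochastic ih

theorem IsKernel.ofReal_kerIter (hA : IsKernel A) (hξ : IsStochastic ξ) (s : ℕ) :
    ENNReal.ofReal ∘ kerIter A s ξ = (kerPush (kerOfReal A))^[s] (ENNReal.ofReal ∘ ξ) := by
  induction s with
  | zero => rfl
  | succ s ih =>
    ext y
    rw [Function.iterate_succ_apply', ← ih, Function.comp_apply, kerIter,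
      hA.ofReal_kerApp (hA.kerIter_isStochastic hξ s)]

theorem dirac_isStochastic (z : ℕ) : IsStochastic (dirac z) :=
  ⟨fun y => by unfold dirac; split_ifs <;> norm_num, by simp [dirac]⟩

theorem IsKernel.kerApp_sub_kerApp_le_tv (hB : IsKernel B) {η : ℕ → ℝ} (hη : IsStochastic η)
    (hξ : IsStochastic ξ) (v : ℕ) : kerApp B η v - kerApp B ξ v ≤ tv η ξ := by
  -- `B v x * d ≤ max d 0 = (|d| + d) / 2` for `d = η x - ξ x`, and the `d`s sum to `0`.
  have hd : ∀ x, B v x * η x - B v x * ξ x ≤ (|η x - ξ x| + (η x - ξ x)) / 2 := by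
    intro x
    have h0 := hB.1 v x
    have h1 := hB.le_one v x
    rcases le_total (η x) (ξ x) with h | h
    · rw [abs_of_nonpos (sub_nonpos.mpr h)]; nlinarith
    · rw [abs_of_nonneg (sub_nonneg.mpr h)]; nlinarith
  have hsη := hη.isProbLaw.summable
  have hsξ := hξ.isProbLaw.summable
  calc kerApp B η v - kerApp B ξ v = ∑' x, (B v x * η x - B v x * ξ x) :=
        ((hB.summable_mul hη v).tsum_sub (hB.summable_mul hξ v)).symm
    _ ≤ ∑' x, (|η x - ξ x| + (η x - ξ x)) / 2 :=
        Summable.tsum_le_tsum hd ((hB.summable_mul hη v).sub (hB.summable_mul hξ v))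
          (((hsη.sub hsξ).abs.add (hsη.sub hsξ)).div_const 2)
    _ = tv η ξ := by
        rw [tsum_div_const, (hsη.sub hsξ).abs.tsum_add (hsη.sub hsξ), hsη.tsum_sub hsξ, hη.2,
          hξ.2, tv]
        ring

theorem IsKernel.kerPush_ofReal_of_stationary (hA : IsKernel A) (hξ : IsStochastic ξ)
    (hst : kerApp A ξ = ξ) : kerPush (kerOfReal A) (ENNReal.ofReal ∘ ξ) = ENNReal.ofReal ∘ ξ := by
  ext y
  rw [← hA.ofReal_kerApp hξ, hst, Function.comp_apply]

theorem kerPull_iterate_kerOfReal (hA : IsKernel A) (hB : IsKernel B) (s z v : ℕ) :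
    (kerPull (kerOfReal A))^[s] (kerOfReal B v) z
      = ENNReal.ofReal (kerApp B (kerIter A s (dirac z)) v) := by
  have hdirac : (fun x => if x = z then 1 else 0 : ℕ → ℝ≥0∞) = ENNReal.ofReal ∘ dirac z := by
    ext x; by_cases hx : x = z <;> simp [dirac, hx]
  rw [kerPull_iterate_apply, hdirac, ← hA.ofReal_kerIter (dirac_isStochastic z),
    hB.ofReal_kerApp (hA.kerIter_isStochastic (dirac_isStochastic z) s)]
  rfl

end RealKernels

section HiddenMarkov

variable {π : ℕ → ℝ} {A B : ℕ → ℕ → ℝ}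

theorem markovLaw_nonneg (hA : IsKernel A) (hπ : IsStochastic π) (n : ℕ) (x : Fin n → ℕ) :
    0 ≤ markovLaw π A n x := by
  cases n with
  | zero => exact zero_le_one
  | succ n => exact mul_nonneg (hπ.1 _) (Finset.prod_nonneg fun i _ => hA.1 _ _)

theorem ofReal_markovLaw (hA : IsKernel A) (hπ : IsStochastic π) (n : ℕ) (x : Fin n → ℕ) :
    ENNReal.ofReal (markovLaw π A n x) = chainLaw (kerOfReal A) (ENNReal.ofReal ∘ π) n x := by
  cases n with
  | zero => simp [markovLaw, chainLaw]
  | succ n =>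
    rw [markovLaw, chainLaw, ENNReal.ofReal_mul (hπ.1 _),
      ENNReal.ofReal_prod_of_nonneg fun i _ => hA.1 _ _]
    rfl

theorem ofReal_hmmLaw (hA : IsKernel A) (hB : IsKernel B) (hπ : IsStochastic π) (n : ℕ)
    (Y : Fin n → ℕ) :
    ENNReal.ofReal (hmmLaw π A B n Y)
      = ∑' x, chainLaw (kerOfReal A) (ENNReal.ofReal ∘ π) n x * ∏ i, kerOfReal B (Y i) (x i) := by
  have hterm : ∀ x, ENNReal.ofReal (markovLaw π A n x * ∏ i, B (Y i) (x i))
      = chainLaw (kerOfReal A) (ENNReal.ofReal ∘ π) n x * ∏ i, kerOfReal B (Y i) (x i) := by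
    intro x
    rw [ENNReal.ofReal_mul (markovLaw_nonneg hA hπ n x),
      ENNReal.ofReal_prod_of_nonneg fun i _ => hB.1 _ _, ofReal_markovLaw hA hπ]
    rfl
  have hfin : ∑' x, chainLaw (kerOfReal A) (ENNReal.ofReal ∘ π) n x
      * ∏ i, kerOfReal B (Y i) (x i) ≠ ⊤ := by
    refine ne_top_of_le_ne_top ENNReal.one_ne_top ?_
    calc _ ≤ ∑' x, chainLaw (kerOfReal A) (ENNReal.ofReal ∘ π) n x :=
          ENNReal.tsum_le_tsum fun x =>
            mul_le_of_le_one_right' (Finset.prod_le_one' fun i _ => hB.kerOfReal_le_one _ _)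
      _ = 1 := tsum_chainLaw hA.tsum_kerOfReal (hπ.isProbLaw.tsum_ofReal) n
  rw [hmmLaw, tsum_eq_toReal_tsum_ofReal fun x =>
      mul_nonneg (markovLaw_nonneg hA hπ n x) (Finset.prod_nonneg fun i _ => hB.1 _ _)]
  simp only [hterm]
  exact ENNReal.ofReal_toReal hfin

theorem tsum_ofReal_hmmLaw_mul_prod (hA : IsKernel A) (hB : IsKernel B) (hπ : IsStochastic π)
    (n : ℕ) (g : Fin n → ℕ → ℝ≥0∞) :
    ∑' Y, ENNReal.ofReal (hmmLaw π A B n Y) * ∏ i, g i (Y i)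
      = ∑' z, chainExpect (kerOfReal A) n (fun i => kerPull (kerOfReal B) (g i)) z
          * (ENNReal.ofReal ∘ π) z := by
  calc ∑' Y : Fin n → ℕ, ENNReal.ofReal (hmmLaw π A B n Y) * ∏ i, g i (Y i)
      = ∑' (Y : Fin n → ℕ) (x : Fin n → ℕ), chainLaw (kerOfReal A) (ENNReal.ofReal ∘ π) n x
          * ∏ i, (g i (Y i) * kerOfReal B (Y i) (x i)) := by
        refine tsum_congr fun Y => ?_
        rw [ofReal_hmmLaw hA hB hπ, ← ENNReal.tsum_mul_right]
        refine tsum_congr fun x => ?_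
        rw [Finset.prod_mul_distrib]
        ring
    _ = ∑' x, chainLaw (kerOfReal A) (ENNReal.ofReal ∘ π) n x
          * ∏ i, kerPull (kerOfReal B) (g i) (x i) := by
        rw [ENNReal.tsum_comm]
        refine tsum_congr fun x => ?_
        rw [ENNReal.tsum_mul_left, ENNReal.tsum_fin_pi_prod fun i w => g i w * kerOfReal B w (x i)]
        rfl
    _ = _ := tsum_chainLaw_mul_prod hA.tsum_kerOfReal (hπ.isProbLaw.tsum_ofReal) n _

theorem hmmLaw_isProbLaw (hA : IsKernel A) (hB : IsKernel B) (hπ : IsStochastic π) (n : ℕ) :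
    IsProbLaw (hmmLaw π A B n) := by
  have hnonneg : ∀ Y, 0 ≤ hmmLaw π A B n Y := fun Y => tsum_nonneg fun x =>
    mul_nonneg (markovLaw_nonneg hA hπ n x) (Finset.prod_nonneg fun i _ => hB.1 _ _)
  refine ⟨hnonneg, ?_⟩
  have hmass := tsum_ofReal_hmmLaw_mul_prod hA hB hπ n 1
  simp only [Pi.one_apply, Finset.prod_const_one, mul_one, kerPull_one hB.tsum_kerOfReal,
    ← Pi.one_def, chainExpect_one hA.tsum_kerOfReal, one_mul] at hmass
  rw [tsum_eq_toReal_tsum_ofReal hnonneg, hmass, Function.comp_def, hπ.isProbLaw.tsum_ofReal,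
    ENNReal.toReal_one]

end HiddenMarkov

section Moments

variable {π : ℕ → ℝ} {A B : ℕ → ℕ → ℝ} {n : ℕ}

def hit (Y : Fin n → ℕ) (k : Fin n) (v : ℕ) : ℝ := if Y k = v then 1 else 0

theorem hit_nonneg (Y : Fin n → ℕ) (k : Fin n) (v : ℕ) : 0 ≤ hit Y k v := by
  unfold hit; split_ifs <;> norm_num

theorem hit_le_one (Y : Fin n → ℕ) (k : Fin n) (v : ℕ) : hit Y k v ≤ 1 := by
  unfold hit; split_ifs <;> norm_num

theorem hit_mul_self (Y : Fin n → ℕ) (k : Fin n) (v : ℕ) : hit Y k v * hit Y k v = hit Y k v := by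
  unfold hit; split_ifs <;> norm_num

theorem ofReal_hit (Y : Fin n → ℕ) (k : Fin n) (v : ℕ) :
    ENNReal.ofReal (hit Y k v)
      = ∏ i : Fin n, (if (i : ℕ) = k then Pi.single v 1 else 1 : ℕ → ℝ≥0∞) (Y i) := by
  rw [Finset.prod_eq_single k (fun i _ hik => by simp [Fin.val_inj, hik]) (by simp)]
  by_cases h : Y k = v <;> simp [hit, h]

theorem ofReal_hit_mul_hit (Y : Fin n → ℕ) {k l : Fin n} (hkl : k ≠ l) (v : ℕ) :
    ENNReal.ofReal (hit Y k v * hit Y l v)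
      = ∏ i : Fin n, (if (i : ℕ) = k then Pi.single v 1
          else if (i : ℕ) = l then Pi.single v 1 else 1 : ℕ → ℝ≥0∞) (Y i) := by
  rw [ENNReal.ofReal_mul (hit_nonneg Y k v), ofReal_hit, ofReal_hit,
    ← Finset.prod_mul_distrib]
  refine Finset.prod_congr rfl fun i _ => ?_
  by_cases hik : i = k
  · subst hik; simp [Fin.val_inj, hkl]
  · simp [Fin.val_inj, hik]

theorem expect_hit (hA : IsKernel A) (hB : IsKernel B) (hπ : IsStochastic π)
    (hst : kerApp A π = π) (k : Fin n) (v : ℕ) :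
    expect (hmmLaw π A B n) (hit · k v) = kerApp B π v := by
  have hμ := hmmLaw_isProbLaw hA hB hπ n
  rw [expect, tsum_eq_toReal_tsum_ofReal fun Y => mul_nonneg (hμ.1 Y) (hit_nonneg Y k v)]
  simp only [ENNReal.ofReal_mul (hμ.1 _), ofReal_hit]
  rw [tsum_ofReal_hmmLaw_mul_prod hA hB hπ]
  simp only [apply_ite (kerPull (kerOfReal B)), kerPull_single, kerPull_one hB.tsum_kerOfReal]
  rw [chainExpect_single hA.tsum_kerOfReal _ k.isLt,
    tsum_kerPull_iterate_mul_of_stationary (hA.kerPush_ofReal_of_stationary hπ hst)]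
  change (kerPush (kerOfReal B) (ENNReal.ofReal ∘ π) v).toReal = _
  rw [← hB.ofReal_kerApp hπ, ENNReal.toReal_ofReal ((hB.kerApp_isStochastic hπ).1 v)]

theorem expect_hit_mul_hit_eq (hA : IsKernel A) (hB : IsKernel B) (hπ : IsStochastic π)
    (hst : kerApp A π = π) {k l : Fin n} (hkl : k < l) (v : ℕ) :
    expect (hmmLaw π A B n) (fun Y => hit Y k v * hit Y l v)
      = (∑' z, (kerOfReal B v * (kerPull (kerOfReal A))^[(l : ℕ) - k] (kerOfReal B v)) z
          * (ENNReal.ofReal ∘ π) z).toReal := by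
  have hμ := hmmLaw_isProbLaw hA hB hπ n
  rw [expect, tsum_eq_toReal_tsum_ofReal fun Y =>
    mul_nonneg (hμ.1 Y) (mul_nonneg (hit_nonneg Y k v) (hit_nonneg Y l v))]
  simp only [ENNReal.ofReal_mul (hμ.1 _), ofReal_hit_mul_hit _ hkl.ne]
  rw [tsum_ofReal_hmmLaw_mul_prod hA hB hπ]
  simp only [apply_ite (kerPull (kerOfReal B)), kerPull_single, kerPull_one hB.tsum_kerOfReal]
  rw [chainExpect_pair hA.tsum_kerOfReal _ _ hkl l.isLt,
    tsum_kerPull_iterate_mul_of_stationary (hA.kerPush_ofReal_of_stationary hπ hst)]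

theorem kerApp_kerIter_dirac_le {G θ : ℝ} (hA : IsKernel A) (hB : IsKernel B)
    (hπ : IsStochastic π) (htv : ∀ s x : ℕ, tv (kerIter A s (dirac x)) π ≤ G * θ ^ s)
    (s z v : ℕ) : kerApp B (kerIter A s (dirac z)) v ≤ kerApp B π v + G * θ ^ s := by
  linarith [hB.kerApp_sub_kerApp_le_tv (hA.kerIter_isStochastic (dirac_isStochastic z) s) hπ v,
    htv s z]

theorem expect_hit_mul_hit_le {G θ : ℝ} (hA : IsKernel A) (hB : IsKernel B)
    (hπ : IsStochastic π) (hst : kerApp A π = π)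
    (htv : ∀ s x : ℕ, tv (kerIter A s (dirac x)) π ≤ G * θ ^ s) {k l : Fin n} (hkl : k < l)
    (v : ℕ) :
    expect (hmmLaw π A B n) (fun Y => hit Y k v * hit Y l v)
      ≤ kerApp B π v * (kerApp B π v + G * θ ^ ((l : ℕ) - k)) := by
  set s := (l : ℕ) - k
  set r := kerApp B π v + G * θ ^ s
  have hρ : 0 ≤ kerApp B π v := (hB.kerApp_isStochastic hπ).1 v
  -- `r` dominates the nonnegative `kerApp B (kerIter A s (dirac z)) v` for any `z`, say `z = 0`.
  have hr : 0 ≤ r := ((hB.kerApp_isStochastic (hA.kerIter_isStochastic (dirac_isStochastic 0) s)).1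
    v).trans (kerApp_kerIter_dirac_le hA hB hπ htv s 0 v)
  rw [expect_hit_mul_hit_eq hA hB hπ hst hkl]
  refine ENNReal.toReal_le_of_le_ofReal (mul_nonneg hρ hr) ?_
  calc ∑' z, (kerOfReal B v * (kerPull (kerOfReal A))^[s] (kerOfReal B v)) z
        * (ENNReal.ofReal ∘ π) z
      ≤ ∑' z, kerOfReal B v z * ENNReal.ofReal r * (ENNReal.ofReal ∘ π) z := by
        refine ENNReal.tsum_le_tsum fun z => ?_
        rw [Pi.mul_apply, kerPull_iterate_kerOfReal hA hB]
        gcongr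
        exact kerApp_kerIter_dirac_le hA hB hπ htv s z v
    _ = ENNReal.ofReal (kerApp B π v * r) := by
        simp only [mul_right_comm _ (ENNReal.ofReal r), ENNReal.tsum_mul_right]
        rw [ENNReal.ofReal_mul hρ, hB.ofReal_kerApp hπ]
        rfl

end Moments

section CorrelationWeights

/-- `ρ_y * corrWeight G θ k l` bounds the covariance of `1[Y_k = y]` and `1[Y_l = y]`. -/
def corrWeight (G θ : ℝ) (k l : ℕ) : ℝ := if k = l then 1 else G * θ ^ Nat.dist k l

variable {G θ : ℝ}

theorem corrWeight_comm (k l : ℕ) : corrWeight G θ k l = corrWeight G θ l k := by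
  simp only [corrWeight, eq_comm, Nat.dist_comm]

theorem sum_range_pow_dist_le (hθ0 : 0 ≤ θ) (hθ1 : θ < 1) (n : ℕ) :
    ∑ k ∈ Finset.range n, θ ^ Nat.dist k n ≤ θ / (1 - θ) :=
  calc ∑ k ∈ Finset.range n, θ ^ Nat.dist k n = ∑ i ∈ Finset.Ico 1 (n + 1), θ ^ i := by
        rw [← Finset.sum_range_reflect, Finset.sum_Ico_eq_sum_range, Nat.add_sub_cancel]
        refine Finset.sum_congr rfl fun j hj => ?_
        rw [Finset.mem_range] at hj
        rw [Nat.dist_eq_sub_of_le (by omega)]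
        congr 1
        omega
    _ ≤ θ ^ 1 / (1 - θ) := geom_sum_Ico_le_of_lt_one hθ0 hθ1
    _ = θ / (1 - θ) := by rw [pow_one]

theorem sum_range_sum_range_corrWeight_le (hG : 0 ≤ G) (hθ0 : 0 ≤ θ) (hθ1 : θ < 1) (n : ℕ) :
    ∑ k ∈ Finset.range n, ∑ l ∈ Finset.range n, corrWeight G θ k l
      ≤ n * ((1 + 2 * G * θ) / (1 - θ)) := by
  induction n with
  | zero => simp
  | succ n ih =>
    have hcol : ∑ k ∈ Finset.range n, corrWeight G θ k n ≤ G * (θ / (1 - θ)) :=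
      calc ∑ k ∈ Finset.range n, corrWeight G θ k n
          = G * ∑ k ∈ Finset.range n, θ ^ Nat.dist k n := by
            rw [Finset.mul_sum]
            exact Finset.sum_congr rfl fun k hk => if_neg (Finset.mem_range.mp hk).ne
        _ ≤ G * (θ / (1 - θ)) := mul_le_mul_of_nonneg_left (sum_range_pow_dist_le hθ0 hθ1 n) hG
    have hrow : ∑ l ∈ Finset.range n, corrWeight G θ n l ≤ G * (θ / (1 - θ)) := by
      simpa only [corrWeight_comm n] using hcol
    have hdiag : corrWeight G θ n n = 1 := if_pos rfl
    have hgain : 1 + 2 * (G * (θ / (1 - θ))) ≤ (1 + 2 * G * θ) / (1 - θ) := by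
      have h1θ : (1 - θ) ≠ 0 := by linarith
      rw [le_div_iff₀ (by linarith), add_mul, mul_assoc, mul_div_assoc', div_mul_cancel₀ _ h1θ]
      nlinarith
    simp only [Finset.sum_range_succ, Finset.sum_add_distrib]
    push_cast
    linarith

theorem sum_sum_corrWeight_le (hG : 0 ≤ G) (hθ0 : 0 ≤ θ) (hθ1 : θ < 1) (n : ℕ) :
    ∑ k : Fin n, ∑ l : Fin n, corrWeight G θ k l ≤ n * ((1 + 2 * G * θ) / (1 - θ)) := by
  simp only [Fin.sum_univ_eq_sum_range (corrWeight G θ _), Fin.sum_univ_eq_sum_range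
    (fun k => ∑ l ∈ Finset.range n, corrWeight G θ k l)]
  exact sum_range_sum_range_corrWeight_le hG hθ0 hθ1 n

end CorrelationWeights

section EmpiricalVariance

variable {π : ℕ → ℝ} {A B : ℕ → ℕ → ℝ} {n : ℕ}

theorem emp_eq_sum_hit (Y : Fin n → ℕ) (v : ℕ) : emp Y v = (∑ k, hit Y k v) / n := rfl

theorem abs_hit_le_one (Y : Fin n → ℕ) (k : Fin n) (v : ℕ) : |hit Y k v| ≤ 1 :=
  abs_le.mpr ⟨by linarith [hit_nonneg Y k v], hit_le_one Y k v⟩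

theorem emp_nonneg (Y : Fin n → ℕ) (v : ℕ) : 0 ≤ emp Y v :=
  div_nonneg (Finset.sum_nonneg fun k _ => hit_nonneg Y k v) n.cast_nonneg

theorem emp_le_one (Y : Fin n → ℕ) (v : ℕ) : emp Y v ≤ 1 := by
  refine div_le_one_of_le₀ ?_ n.cast_nonneg
  calc ∑ k, hit Y k v ≤ ∑ _k : Fin n, (1 : ℝ) := Finset.sum_le_sum fun k _ => hit_le_one Y k v
    _ = n := by simp

theorem abs_emp_le_one (Y : Fin n → ℕ) (v : ℕ) : |emp Y v| ≤ 1 :=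
  abs_le.mpr ⟨by linarith [emp_nonneg Y v], emp_le_one Y v⟩

theorem expect_emp (hA : IsKernel A) (hB : IsKernel B) (hπ : IsStochastic π)
    (hst : kerApp A π = π) (hn : n ≠ 0) (v : ℕ) :
    expect (hmmLaw π A B n) (emp · v) = kerApp B π v := by
  have hμ := hmmLaw_isProbLaw hA hB hπ n
  simp only [emp_eq_sum_hit]
  rw [expect_div_const,
    expect_finset_sum fun k _ => hμ.summable_mul fun Y => abs_hit_le_one Y k v]
  simp only [expect_hit hA hB hπ hst, Finset.sum_const, Finset.card_univ, Fintype.card_fin,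
    nsmul_eq_mul]
  field_simp

theorem expect_emp_sq (hA : IsKernel A) (hB : IsKernel B) (hπ : IsStochastic π) (v : ℕ) :
    expect (hmmLaw π A B n) (fun Y => emp Y v ^ 2)
      = (∑ k, ∑ l, expect (hmmLaw π A B n) (fun Y => hit Y k v * hit Y l v)) / n ^ 2 := by
  have hμ := hmmLaw_isProbLaw hA hB hπ n
  have hs (k l : Fin n) : Summable fun Y => hmmLaw π A B n Y * (hit Y k v * hit Y l v) :=
    hμ.summable_mul fun Y => by
      rw [abs_mul]; exact mul_le_one₀ (abs_hit_le_one Y k v) (abs_nonneg _) (abs_hit_le_one Y l v)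
  have hsq (Y : Fin n → ℕ) : emp Y v ^ 2 = (∑ k, ∑ l, hit Y k v * hit Y l v) / n ^ 2 := by
    rw [emp_eq_sum_hit, div_pow, sq, Finset.sum_mul_sum]
  simp only [hsq]
  rw [expect_div_const, expect_finset_sum fun k _ => by
    simpa only [Finset.mul_sum] using summable_sum fun l _ => hs k l]
  simp only [expect_finset_sum fun l _ => hs _ l]

theorem expect_hit_mul_hit_le_corrWeight {G θ : ℝ} (hA : IsKernel A) (hB : IsKernel B)
    (hπ : IsStochastic π) (hst : kerApp A π = π)
    (htv : ∀ s x : ℕ, tv (kerIter A s (dirac x)) π ≤ G * θ ^ s) (k l : Fin n) (v : ℕ) :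
    expect (hmmLaw π A B n) (fun Y => hit Y k v * hit Y l v)
      ≤ kerApp B π v ^ 2 + kerApp B π v * corrWeight G θ k l := by
  rcases lt_trichotomy k l with hkl | rfl | hkl
  · have := expect_hit_mul_hit_le hA hB hπ hst htv hkl v
    rw [corrWeight, if_neg (Fin.val_ne_of_ne hkl.ne), Nat.dist_eq_sub_of_le hkl.le]
    linarith
  · simp only [hit_mul_self, expect_hit hA hB hπ hst, corrWeight, if_true]
    nlinarith [(hB.kerApp_isStochastic hπ).1 v]
  · have := expect_hit_mul_hit_le hA hB hπ hst htv hkl v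
    rw [corrWeight, if_neg (Fin.val_ne_of_ne hkl.ne'), Nat.dist_comm,
      Nat.dist_eq_sub_of_le hkl.le]
    simp only [mul_comm (hit _ k v)]
    linarith

theorem variance_emp_le {G θ : ℝ} (hA : IsKernel A) (hB : IsKernel B)
    (hge : IsGeomErgodic A π G θ) (hn : 0 < n) (v : ℕ) :
    expect (hmmLaw π A B n) (fun Y => (emp Y v - expect (hmmLaw π A B n) (emp · v)) ^ 2)
      ≤ kerApp B π v * ((1 + 2 * G * θ) / (n * (1 - θ))) := by
  obtain ⟨hG, hθ0, hθ1, hπ, hst, htv⟩ := hge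
  set ρ := kerApp B π v
  have hρ : 0 ≤ ρ := (hB.kerApp_isStochastic hπ).1 v
  have hweights := sum_sum_corrWeight_le (zero_le_one.trans hG) hθ0 hθ1 n
  have hpairs : ∑ k : Fin n, ∑ l : Fin n, expect (hmmLaw π A B n) (fun Y => hit Y k v * hit Y l v)
      ≤ n ^ 2 * ρ ^ 2 + ρ * ∑ k : Fin n, ∑ l : Fin n, corrWeight G θ k l := by
    calc _ ≤ ∑ k : Fin n, ∑ l : Fin n, (ρ ^ 2 + ρ * corrWeight G θ k l) :=
          Finset.sum_le_sum fun k _ => Finset.sum_le_sum fun l _ =>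
            expect_hit_mul_hit_le_corrWeight hA hB hπ hst htv k l v
      _ = n ^ 2 * ρ ^ 2 + ρ * ∑ k : Fin n, ∑ l : Fin n, corrWeight G θ k l := by
          simp only [Finset.sum_add_distrib, ← Finset.mul_sum, Finset.sum_const, Finset.card_univ,
            Fintype.card_fin, nsmul_eq_mul]
          ring
  rw [(hmmLaw_isProbLaw hA hB hπ n).expect_sub_expect_sq fun Y => abs_emp_le_one Y v,
    expect_emp_sq hA hB hπ v, expect_emp hA hB hπ hst hn.ne' v]
  calc _ ≤ (n ^ 2 * ρ ^ 2 + ρ * ∑ k : Fin n, ∑ l : Fin n, corrWeight G θ k l) / n ^ 2 - ρ ^ 2 := by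
        gcongr
    _ = ρ * (∑ k : Fin n, ∑ l : Fin n, corrWeight G θ k l) / n ^ 2 := by
        field_simp
        ring
    _ ≤ ρ * (n * ((1 + 2 * G * θ) / (1 - θ))) / n ^ 2 := by gcongr
    _ = ρ * ((1 + 2 * G * θ) / (n * (1 - θ))) := by
        field_simp

end EmpiricalVariance

/-- **Variance bound from the proof of Lemma 4.** For a stationary `(G,θ)`-geometrically
ergodic hidden Markov chain with stationary output distribution `ρ = Bπ`:
`Var[ρ̂_y] ≤ ρ_y (1+2Gθ)/(n(1−θ))` for every `y`, and consequently
`𝔼 ∑_y (ρ_y − ρ̂_y)² ≤ (1+2Gθ)/(n(1−θ))`. -/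
theorem variance_bound (G θ : ℝ) (π : ℕ → ℝ) (A B : ℕ → ℕ → ℝ)
    (hA : IsKernel A) (hB : IsKernel B) (hge : IsGeomErgodic A π G θ)
    (n : ℕ) (hn : 0 < n) :
    (∀ v : ℕ,
      expect (hmmLaw π A B n)
          (fun Y => (emp Y v - expect (hmmLaw π A B n) (fun Y' => emp Y' v)) ^ 2)
        ≤ kerApp B π v * ((1 + 2 * G * θ) / (n * (1 - θ)))) ∧
    expect (hmmLaw π A B n) (fun Y => ∑' v : ℕ, (kerApp B π v - emp Y v) ^ 2)
      ≤ (1 + 2 * G * θ) / (n * (1 - θ)) := by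
  have hvar := variance_emp_le hA hB hge hn
  refine ⟨hvar, ?_⟩
  obtain ⟨-, -, -, hπ, hst, -⟩ := hge
  have hμ := hmmLaw_isProbLaw hA hB hπ n
  have hρ := (hB.kerApp_isStochastic hπ).isProbLaw
  have hvar' (v : ℕ) : ∑' Y, hmmLaw π A B n Y * (kerApp B π v - emp Y v) ^ 2
      ≤ kerApp B π v * ((1 + 2 * G * θ) / (n * (1 - θ))) := by
    have h := hvar v
    rw [expect_emp hA hB hπ hst hn.ne' v] at h
    simpa only [expect, sub_sq_comm (emp _ v)] using h
  have hdev (v : ℕ) (Y : Fin n → ℕ) : |(kerApp B π v - emp Y v) ^ 2| ≤ 1 := by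
    rw [abs_pow]
    exact pow_le_one₀ (abs_nonneg _) (abs_sub_le_of_nonneg_of_le (hρ.1 v) (hρ.le_one v)
      (emp_nonneg Y v) (emp_le_one Y v))
  calc expect (hmmLaw π A B n) (fun Y => ∑' v : ℕ, (kerApp B π v - emp Y v) ^ 2)
      = ∑' (Y : Fin n → ℕ) (v : ℕ), hmmLaw π A B n Y * (kerApp B π v - emp Y v) ^ 2 := by
        simp only [expect, tsum_mul_left]
    _ ≤ ∑' v, kerApp B π v * ((1 + 2 * G * θ) / (n * (1 - θ))) :=
        tsum_tsum_le_of_nonneg (fun Y v => mul_nonneg (hμ.1 Y) (sq_nonneg _))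
          (fun v => hμ.summable_mul (hdev v)) (hρ.summable.mul_right _) hvar'
    _ = (1 + 2 * G * θ) / (n * (1 - θ)) := by rw [tsum_mul_right, hρ.2, one_mul]

end
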